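/- Let x_1, …, x_n ∈ ℝ^d be unit vectors, let b : ℕ → ℝ satisfy b_k ≥ 0 and Σ_{k=0}^∞ b_k < ∞, and suppose the matrix H with H_{ab} = Σ_k b_k (x_a·x_b)^k is positive definite. Let (a_k)_{k∈ℕ} be real coefficients and (β_k)_{k∈ℕ} vectors in ℝ^d, with b_k > 0 whenever a_k ≠ 0, and suppose S := Σ_{k=0}^∞ b_k^{−1/2} |a_k| ‖β_k‖^k < ∞. Define y ∈ ℝⁿ by y_a = Σ_{k=0}^∞ a_k (β_k · x_a)^k (the series converges absolutely). Then √(yᵀ H⁻¹ y) ≤ S. -/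

import Mathlib

open Matrix
open scoped RealInnerProductSpace

/-!
Put `v = H⁻¹ y` and `W = yᵀ H⁻¹ y`. The degree-`k` monomial features `φ_k` satisfy
`⟪φ_k u, φ_k w⟫ = ⟪u, w⟫ ^ k` and `‖φ_k u‖ = ‖u‖ ^ k`, so `H = ∑ₖ b_k G_k` with `G_k` the Gram
matrix of the `φ_k x_a`, and `W = vᵀ H v = ∑ₖ b_k q_k` with `q_k = vᵀ G_k v ≥ 0`. On the other hand
`W = vᵀ y = ∑ₖ a_k ⟪φ_k β_k, ∑_a v_a φ_k x_a⟫`, and Cauchy–Schwarz bounds the `k`-th term by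
`|a_k| ‖β_k‖^k √q_k = b_k^{-1/2} |a_k| ‖β_k‖^k √(b_k q_k) ≤ b_k^{-1/2} |a_k| ‖β_k‖^k √W`.
Summing gives `W ≤ S √W`, that is `√W ≤ S`.
-/

section PowerFeature

variable {κ : Type*} [Fintype κ]

def powerFeature (k : ℕ) (u : EuclideanSpace ℝ κ) : EuclideanSpace ℝ (Fin k → κ) :=
  WithLp.toLp 2 fun p => ∏ i, u (p i)

lemma inner_powerFeature (k : ℕ) (u w : EuclideanSpace ℝ κ) :
    ⟪powerFeature k u, powerFeature k w⟫ = ⟪u, w⟫ ^ k := by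
  simp only [powerFeature, PiLp.inner_apply, RCLike.inner_apply, conj_trivial,
    ← Finset.prod_mul_distrib, Fintype.sum_pow]

lemma norm_powerFeature (k : ℕ) (u : EuclideanSpace ℝ κ) :
    ‖powerFeature k u‖ = ‖u‖ ^ k := by
  have h := inner_powerFeature k u u
  rw [real_inner_self_eq_norm_sq, real_inner_self_eq_norm_sq, ← pow_mul, mul_comm, pow_mul] at h
  exact (pow_left_inj₀ (norm_nonneg _) (by positivity) two_ne_zero).1 h

end PowerFeature

section Gram

variable {ι F : Type*} [Fintype ι] [NormedAddCommGroup F] [InnerProductSpace ℝ F]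

lemma dotProduct_gram_mulVec_self (w : ι → F) (v : ι → ℝ) :
    v ⬝ᵥ (gram ℝ w *ᵥ v) = ‖∑ e, v e • w e‖ ^ 2 := by
  simpa [real_inner_self_eq_norm_sq] using star_dotProduct_gram_mulVec (𝕜 := ℝ) w v v

lemma abs_dotProduct_inner_le (w : ι → F) (β : F) (v : ι → ℝ) :
    |v ⬝ᵥ fun e => ⟪β, w e⟫| ≤ ‖β‖ * √(v ⬝ᵥ (gram ℝ w *ᵥ v)) := by
  have h : (v ⬝ᵥ fun e => ⟪β, w e⟫) = ⟪β, ∑ e, v e • w e⟫ := by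
    simp only [dotProduct, inner_sum, inner_smul_right]
  rw [h, dotProduct_gram_mulVec_self, Real.sqrt_sq (norm_nonneg _)]
  exact abs_real_inner_le_norm _ _

lemma abs_dotProduct_inner_pow_le {κ : Type*} [Fintype κ] (x : ι → EuclideanSpace ℝ κ)
    (β : EuclideanSpace ℝ κ) (v : ι → ℝ) (k : ℕ) :
    |v ⬝ᵥ fun e => ⟪β, x e⟫ ^ k| ≤ ‖β‖ ^ k * √(v ⬝ᵥ (gram ℝ (powerFeature k ∘ x) *ᵥ v)) := by
  simpa only [Function.comp_apply, inner_powerFeature, norm_powerFeature] using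
    abs_dotProduct_inner_le (powerFeature k ∘ x) (powerFeature k β) v

end Gram

section SeriesDotProduct

variable {ι X R : Type*} [Fintype ι] [NonUnitalNonAssocSemiring R] [TopologicalSpace R]
  [IsTopologicalSemiring R]

lemma hasSum_dotProduct {g : X → ι → R} {y : ι → R} (h : ∀ e, HasSum (fun k => g k e) (y e))
    (u : ι → R) : HasSum (fun k => u ⬝ᵥ g k) (u ⬝ᵥ y) :=
  hasSum_sum fun e _ => (h e).mul_left (u e)

lemma hasSum_dotProduct_mulVec {M : X → Matrix ι ι R} {A : Matrix ι ι R}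
    (h : ∀ e f, HasSum (fun k => M k e f) (A e f)) (u w : ι → R) :
    HasSum (fun k => u ⬝ᵥ (M k *ᵥ w)) (u ⬝ᵥ (A *ᵥ w)) :=
  hasSum_dotProduct (fun e => hasSum_sum fun f _ => (h e f).mul_right (w f)) u

end SeriesDotProduct

lemma abs_mul_eq_sqrt_mul_inv_sqrt_mul {a b m : ℝ} (hab : a ≠ 0 → 0 < b) :
    |a| * m = √b * ((√b)⁻¹ * |a| * m) := by
  rcases eq_or_ne a 0 with rfl | ha
  · simp
  · have := Real.sqrt_pos.2 (hab ha)
    field_simp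

section PowerSeries

variable {F : Type*} [NormedAddCommGroup F] [InnerProductSpace ℝ F]

lemma abs_inner_le_norm_of_norm_le_one (u : F) {w : F} (hw : ‖w‖ ≤ 1) : |⟪u, w⟫| ≤ ‖u‖ :=
  (abs_real_inner_le_norm u w).trans (mul_le_of_le_one_right (norm_nonneg u) hw)

lemma summable_mul_inner_pow_of_norm_le_one {b : ℕ → ℝ} (hb : ∀ k, 0 ≤ b k) (hb_sum : Summable b)
    {u w : F} (hu : ‖u‖ ≤ 1) (hw : ‖w‖ ≤ 1) : Summable fun k => b k * ⟪u, w⟫ ^ k := by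
  refine Summable.of_norm_bounded hb_sum fun k => ?_
  rw [Real.norm_eq_abs, abs_mul, abs_pow, abs_of_nonneg (hb k)]
  exact mul_le_of_le_one_right (hb k)
    (pow_le_one₀ (abs_nonneg _) ((abs_inner_le_norm_of_norm_le_one u hw).trans hu))

lemma summable_mul_inner_pow_of_summable_inv_sqrt {a b : ℕ → ℝ} {β : ℕ → F} {w : F}
    (hb : ∀ k, 0 ≤ b k) (hb_sum : Summable b) (hab : ∀ k, a k ≠ 0 → 0 < b k)
    (hS : Summable fun k => (√(b k))⁻¹ * |a k| * ‖β k‖ ^ k) (hw : ‖w‖ ≤ 1) :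
    Summable fun k => a k * ⟪β k, w⟫ ^ k := by
  refine Summable.of_norm_bounded (hS.mul_left √(∑' k, b k)) fun k => ?_
  calc ‖a k * ⟪β k, w⟫ ^ k‖ ≤ |a k| * ‖β k‖ ^ k := by
        rw [Real.norm_eq_abs, abs_mul, abs_pow]
        gcongr
        exact abs_inner_le_norm_of_norm_le_one _ hw
    _ = √(b k) * ((√(b k))⁻¹ * |a k| * ‖β k‖ ^ k) := abs_mul_eq_sqrt_mul_inv_sqrt_mul (hab k)
    _ ≤ √(∑' k, b k) * ((√(b k))⁻¹ * |a k| * ‖β k‖ ^ k) := by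
        gcongr
        exact hb_sum.le_tsum k fun j _ => hb j

end PowerSeries

lemma sqrt_le_of_le_mul_sqrt {W S : ℝ} (hW : 0 ≤ W) (hS : 0 ≤ S) (h : W ≤ S * √W) : √W ≤ S := by
  nlinarith [Real.mul_self_sqrt hW, Real.sqrt_nonneg W]

lemma sqrt_le_tsum_of_hasSum {b q a E m : ℕ → ℝ} {W : ℝ} (hb : ∀ k, 0 ≤ b k) (hq : ∀ k, 0 ≤ q k)
    (hm : ∀ k, 0 ≤ m k) (hab : ∀ k, a k ≠ 0 → 0 < b k) (hE : ∀ k, |E k| ≤ m k * √(q k))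
    (hS : Summable fun k => (√(b k))⁻¹ * |a k| * m k)
    (hbq : HasSum (fun k => b k * q k) W) (haE : HasSum (fun k => a k * E k) W) :
    √W ≤ ∑' k, (√(b k))⁻¹ * |a k| * m k := by
  have hbq_nonneg : ∀ k, 0 ≤ b k * q k := fun k => mul_nonneg (hb k) (hq k)
  have hc : ∀ k, 0 ≤ (√(b k))⁻¹ * |a k| * m k := fun k => by have := hm k; positivity
  have hterm : ∀ k, a k * E k ≤ (√(b k))⁻¹ * |a k| * m k * √W := fun k =>
    calc a k * E k ≤ |a k| * (m k * √(q k)) :=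
          (le_abs_self _).trans ((abs_mul _ _).trans_le (by gcongr; exact hE k))
      _ = (√(b k))⁻¹ * |a k| * m k * √(b k * q k) := by
          rw [← mul_assoc, abs_mul_eq_sqrt_mul_inv_sqrt_mul (hab k), Real.sqrt_mul (hb k)]; ring
      _ ≤ (√(b k))⁻¹ * |a k| * m k * √W := by
          gcongr
          · exact hc k
          · exact le_hasSum hbq k fun j _ => hbq_nonneg j
  exact sqrt_le_of_le_mul_sqrt (hbq.nonneg hbq_nonneg) (tsum_nonneg hc)
    (hasSum_le hterm haE (hS.hasSum.mul_right _))

theorem stmt4 (n d : ℕ) (x : Fin n → EuclideanSpace ℝ (Fin d))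
    (hx : ∀ a, ‖x a‖ = 1)
    (b : ℕ → ℝ) (hb_nonneg : ∀ k, 0 ≤ b k) (hb_sum : Summable b)
    (H : Matrix (Fin n) (Fin n) ℝ)
    (hH : ∀ a c, H a c = ∑' k : ℕ, b k * ⟪x a, x c⟫ ^ k)
    (hHpd : H.PosDef)
    (a : ℕ → ℝ) (β : ℕ → EuclideanSpace ℝ (Fin d))
    (hab : ∀ k, a k ≠ 0 → 0 < b k)
    (hS : Summable (fun k : ℕ => (Real.sqrt (b k))⁻¹ * |a k| * ‖β k‖ ^ k))
    (y : Fin n → ℝ) (hy : ∀ c, y c = ∑' k : ℕ, a k * ⟪β k, x c⟫ ^ k) :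
    Real.sqrt (y ⬝ᵥ (H⁻¹ *ᵥ y)) ≤
      ∑' k : ℕ, (Real.sqrt (b k))⁻¹ * |a k| * ‖β k‖ ^ k := by
  set G : ℕ → Matrix (Fin n) (Fin n) ℝ := fun k => gram ℝ (powerFeature k ∘ x)
  set g : ℕ → Fin n → ℝ := fun k c => ⟪β k, x c⟫ ^ k
  set v := H⁻¹ *ᵥ y
  have hHsum : ∀ e f, HasSum (fun k => (b k • G k) e f) (H e f) := fun e f => by
    simpa only [G, Matrix.smul_apply, gram_apply, Function.comp_apply, inner_powerFeature,
      smul_eq_mul, hH e f] using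
      (summable_mul_inner_pow_of_norm_le_one hb_nonneg hb_sum (hx e).le (hx f).le).hasSum
  have hysum : ∀ c, HasSum (fun k => (a k • g k) c) (y c) := fun c => by
    simpa only [g, Pi.smul_apply, smul_eq_mul, hy c] using
      (summable_mul_inner_pow_of_summable_inv_sqrt hb_nonneg hb_sum hab hS (hx c).le).hasSum
  have hHv : H *ᵥ v = y := by
    rw [mulVec_mulVec, mul_nonsing_inv _ ((isUnit_iff_isUnit_det H).1 hHpd.isUnit), one_mulVec]
  refine sqrt_le_tsum_of_hasSum (q := fun k => v ⬝ᵥ (G k *ᵥ v)) (E := fun k => v ⬝ᵥ g k)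
    hb_nonneg (fun k => ?_) (fun k => by positivity) hab
    (fun k => abs_dotProduct_inner_pow_le x (β k) v k) hS ?_ ?_
  · simp only [G, dotProduct_gram_mulVec_self]; positivity
  · simpa [smul_mulVec, dotProduct_smul, hHv, dotProduct_comm v y] using
      hasSum_dotProduct_mulVec hHsum v v
  · simpa [dotProduct_smul, dotProduct_comm v y] using hasSum_dotProduct hysum v
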